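/- arXiv:1701.05031 — 5 statements merged into one kernel-verified Lean document; each statement's English description precedes it below -/
import Mathlib

section
/- Let p be a prime, h a non-square nonzero element of 𝔽_p, ξ a root of X^p − X − h, and K = 𝔽_p(ξ). Then for every a ∈ 𝔽_p, the element a + ξ is not a square in K. -/
/-! `y = a + ξ` is again a root of the Artin–Schreier polynomial `X ^ p - X - h`, and it does not
lie in `𝔽_p`, where `c ^ p - c = 0 ≠ h`. As `[K : 𝔽_p] = p` is prime, `y` generates `K`, so
`X ^ p - X - h` is its minimal polynomial and `N(y) = (-1) ^ p * (-h) = h`. The norm of a square is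
a square, and `h` is not one. -/

open Polynomial

open Module IntermediateField in
theorem Algebra.norm_eq_of_natDegree_minpoly_eq_finrank {K L : Type*} [Field K] [Field L]
    [Algebra K L] [FiniteDimensional K L] {x : L}
    (hx : (minpoly K x).natDegree = finrank K L) :
    Algebra.norm K x = (-1) ^ finrank K L * (minpoly K x).coeff 0 := by
  have hint : IsIntegral K x := .of_finite K x
  have hrank : finrank K⟮x⟯ L = 1 := by
    have := finrank_mul_finrank K K⟮x⟯ L
    rw [adjoin.finrank hint, hx] at this
    exact (Nat.mul_eq_left finrank_pos.ne').mp this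
  have := PowerBasis.norm_gen_eq_coeff_zero_minpoly (IntermediateField.adjoin.powerBasis hint)
  rw [IntermediateField.adjoin.powerBasis_dim, IntermediateField.adjoin.powerBasis_gen, hx,
    minpoly_gen] at this
  rw [Algebra.norm_eq_norm_adjoin, hrank, pow_one, this]

theorem minpoly_natDegree_eq_finrank_of_prime {K L : Type*} [Field K] [Field L] [Algebra K L]
    [FiniteDimensional K L] (hprime : (Module.finrank K L).Prime) {x : L}
    (hx : x ∉ (algebraMap K L).range) :
    (minpoly K x).natDegree = Module.finrank K L :=
  (hprime.eq_one_or_self_of_dvd _ (minpoly.degree_dvd (.of_finite K x))).resolve_left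
    (mt minpoly.natDegree_eq_one_iff.mp hx)

namespace Polynomial

noncomputable def artinSchreier {R : Type*} [Ring R] (p : ℕ) (a : R) : R[X] := X ^ p - X - C a

variable {R : Type*} [Ring R] {p : ℕ} (a : R)

theorem artinSchreier_eq_X_pow_sub : artinSchreier p a = X ^ p - (X + C a) := sub_sub _ _ _

theorem coeff_zero_artinSchreier (hp : p ≠ 0) : (artinSchreier p a).coeff 0 = -a := by
  simp [artinSchreier, coeff_X_pow, hp.symm]

variable [Nontrivial R]

theorem monic_artinSchreier (hp : 1 < p) : (artinSchreier p a).Monic := by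
  rw [artinSchreier_eq_X_pow_sub]
  exact monic_X_pow_sub (by rw [degree_X_add_C]; exact_mod_cast hp)

theorem natDegree_artinSchreier (hp : 1 < p) : (artinSchreier p a).natDegree = p := by
  rw [artinSchreier_eq_X_pow_sub, natDegree_sub_eq_left_of_natDegree_lt] <;> simp [hp]

end Polynomial

section ArtinSchreier

open Module

variable {p : ℕ} [Fact p.Prime] {K : Type*} [Field K] [Algebra (ZMod p) K]

theorem algebraMap_add_pow_sub_self (a : ZMod p) (y : K) :
    (algebraMap (ZMod p) K a + y) ^ p - (algebraMap (ZMod p) K a + y) = y ^ p - y := by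
  have := charP_of_injective_algebraMap (algebraMap (ZMod p) K).injective p
  rw [add_pow_char, ← map_pow, ZMod.pow_card]
  ring

variable {h : ZMod p} {y : K}

theorem notMem_range_of_pow_sub_self_eq (hh : h ≠ 0) (hy : y ^ p - y = algebraMap (ZMod p) K h) :
    y ∉ (algebraMap (ZMod p) K).range := by
  rintro ⟨c, rfl⟩
  rw [← map_pow, ← map_sub, ZMod.pow_card, sub_self, (algebraMap (ZMod p) K).injective.eq_iff]
    at hy
  exact hh hy.symm

variable [FiniteDimensional (ZMod p) K]

theorem minpoly_eq_artinSchreier (hrank : finrank (ZMod p) K = p) (hh : h ≠ 0)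
    (hy : y ^ p - y = algebraMap (ZMod p) K h) :
    minpoly (ZMod p) y = artinSchreier p h := by
  have hp : p.Prime := Fact.out
  refine eq_of_dvd_of_natDegree_le_of_leadingCoeff (minpoly.dvd _ _ ?_) ?_ ?_
  · simp [artinSchreier, hy]
  · rw [natDegree_artinSchreier _ hp.one_lt,
      minpoly_natDegree_eq_finrank_of_prime (by rwa [hrank])
        (notMem_range_of_pow_sub_self_eq hh hy), hrank]
  · rw [(minpoly.monic (.of_finite _ y)).leadingCoeff,
      (monic_artinSchreier _ hp.one_lt).leadingCoeff]

theorem norm_eq_of_pow_sub_self_eq (hrank : finrank (ZMod p) K = p) (hh : h ≠ 0)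
    (hy : y ^ p - y = algebraMap (ZMod p) K h) :
    Algebra.norm (ZMod p) y = h := by
  have hp : p.Prime := Fact.out
  have hmin := minpoly_eq_artinSchreier hrank hh hy
  have hdeg : (minpoly (ZMod p) y).natDegree = finrank (ZMod p) K := by
    rw [hmin, natDegree_artinSchreier _ hp.one_lt, hrank]
  rw [Algebra.norm_eq_of_natDegree_minpoly_eq_finrank hdeg, hmin,
    coeff_zero_artinSchreier _ hp.ne_zero, hrank, ZMod.pow_card]
  ring

end ArtinSchreier

theorem translate_of_root_not_square_general (p : ℕ) [Fact p.Prime] (h : ZMod p) (hh : h ≠ 0)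
    (hns : ¬ IsSquare h)
    (K : Type*) [Field K] [Algebra (ZMod p) K] [FiniteDimensional (ZMod p) K]
    (hrank : Module.finrank (ZMod p) K = p)
    (ξ : K) (hξ : ξ ^ p - ξ - algebraMap (ZMod p) K h = 0)
    (a : ZMod p) :
    ¬ IsSquare (algebraMap (ZMod p) K a + ξ) := by
  have hY := (algebraMap_add_pow_sub_self a ξ).trans (sub_eq_zero.mp hξ)
  intro hsq
  apply hns
  rw [← norm_eq_of_pow_sub_self_eq hrank hh hY]
  exact hsq.map (Algebra.norm (ZMod p))

theorem translate_of_root_not_square (p : ℕ) [Fact p.Prime] (h : ZMod p) (hh : h ≠ 0)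
    (hns : ¬ IsSquare h)
    (K : Type*) [Field K] [Finite K] [Algebra (ZMod p) K] [FiniteDimensional (ZMod p) K]
    (hrank : Module.finrank (ZMod p) K = p)
    (ξ : K) (hξ : ξ ^ p - ξ - algebraMap (ZMod p) K h = 0)
    (a : ZMod p) :
    ¬ IsSquare (algebraMap (ZMod p) K a + ξ) :=
  translate_of_root_not_square_general p h hh hns K hrank ξ hξ a
end

section
/- Let q be an odd prime power and let f₁, f₂ be distinct monic quadratic polynomials over 𝔽_q. If f_{i₁} ∘ ⋯ ∘ f_{i_n} = f_{j₁} ∘ ⋯ ∘ f_{j_m} with all indices in {1,2}, then m = n and i_h = j_h for every index h. -/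
/-!
Since `2 ≠ 0`, every monic quadratic is `(X - b)² + c`. If `g` and `G` are monic of the same
positive degree and `((X - b)² + c) ∘ g = ((X - β)² + γ) ∘ G + t`, then `(g - b)² - (G - β)²` is
a constant, which forces `g - b = G - β` and `c = γ + t`. Comparing degrees, both compositions
have the same length, and we peel off the outermost factors. If they agree, the inner
compositions agree. If they differ, they are `f₁` and `f₂`, which must then share the same `c`,
and the inner compositions differ by the nonzero constant `b - β`; peeling once more gives
`c = c + (b - β)` (or `X = X + (b - β)` when nothing is left), a contradiction.
-/

open Polynomial

namespace Polynomial

section CommRing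

variable {R : Type*} [CommRing R]

noncomputable def compList (l : List R[X]) : R[X] :=
  l.foldr (fun a b => a.comp b) X

@[simp]
theorem compList_nil : compList ([] : List R[X]) = X := rfl

@[simp]
theorem compList_cons (f : R[X]) (l : List R[X]) : compList (f :: l) = f.comp (compList l) := rfl

theorem Monic.sub_C {p : R[X]} (hp : p.Monic) (hpos : 0 < p.natDegree) (a : R) :
    (p - C a).Monic :=
  hp.sub_of_left <| degree_C_le.trans_lt <| natDegree_pos_iff_degree_pos.mp hpos

section Nontrivial

variable [Nontrivial R]

theorem natDegree_sq_add_C (b c : R) : ((X - C b) ^ 2 + C c).natDegree = 2 := by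
  rw [natDegree_add_C, (monic_X_sub_C b).natDegree_pow, natDegree_X_sub_C]

theorem monic_sq_add_C (b c : R) : ((X - C b) ^ 2 + C c).Monic :=
  ((monic_X_sub_C b).pow 2).add_of_left <| degree_C_le.trans_lt <|
    natDegree_pos_iff_degree_pos.mp <| by
      rw [(monic_X_sub_C b).natDegree_pow, natDegree_X_sub_C]; decide

end Nontrivial

variable [IsDomain R]

theorem natDegree_compList (l : List R[X]) : (compList l).natDegree = (l.map natDegree).prod := by
  induction l with
  | nil => simp
  | cons f l ih => simp [natDegree_comp, ih]

theorem natDegree_compList_of_forall_natDegree_eq {d : ℕ} {l : List R[X]}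
    (hl : ∀ g ∈ l, g.natDegree = d) : (compList l).natDegree = d ^ l.length := by
  rw [natDegree_compList, List.map_congr_left hl, List.map_const', List.prod_replicate]

theorem monic_compList {l : List R[X]} (hl : ∀ g ∈ l, g.Monic ∧ g.natDegree ≠ 0) :
    (compList l).Monic := by
  induction l with
  | nil => exact monic_X
  | cons f l ih =>
    rw [List.forall_mem_cons] at hl
    rw [compList_cons]
    refine hl.1.1.comp (ih hl.2) ?_
    rw [natDegree_compList]
    exact List.prod_ne_zero <| by simpa using fun g hg => (hl.2 g hg).2

theorem eq_of_sq_eq_sq_add_C (two : (2 : R) ≠ 0) {u v : R[X]} (hu : u.Monic) (hv : v.Monic)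
    (hdeg : u.natDegree = v.natDegree) {s : R} (h : u ^ 2 = v ^ 2 + C s) : u = v := by
  by_contra huv
  have hcoeff : (u + v).coeff v.natDegree ≠ 0 := by
    rwa [coeff_add, ← hdeg, hu.coeff_natDegree, hdeg, hv.coeff_natDegree, one_add_one_eq_two]
  have hsum : u + v ≠ 0 := fun h0 => hcoeff (by rw [h0, coeff_zero])
  have hprod : (u + v) * (u - v) = C s := by linear_combination h
  have hdeg_prod := congrArg natDegree hprod
  rw [natDegree_mul hsum (sub_ne_zero.mpr huv), natDegree_C] at hdeg_prod
  have hv₀ : v.natDegree = 0 := by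
    have := le_natDegree_of_ne_zero hcoeff
    omega
  exact huv <| (hu.natDegree_eq_zero.mp (hdeg ▸ hv₀)).trans
    (hv.natDegree_eq_zero.mp hv₀).symm

theorem sub_C_eq_of_sq_add_C_comp_eq (two : (2 : R) ≠ 0) {g G : R[X]} (hg : g.Monic)
    (hG : G.Monic) (hdeg : g.natDegree = G.natDegree) (hpos : 0 < G.natDegree) {b c β γ t : R}
    (h : ((X - C b) ^ 2 + C c).comp g = ((X - C β) ^ 2 + C γ).comp G + C t) :
    g - C b = G - C β ∧ c = γ + t := by
  simp only [add_comp, pow_comp, sub_comp, X_comp, C_comp] at h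
  have hsq : (g - C b) ^ 2 = (G - C β) ^ 2 + C (γ + t - c) := by
    rw [map_sub, map_add]; linear_combination h
  have hsub := eq_of_sq_eq_sq_add_C two (hg.sub_C (hdeg ▸ hpos) b) (hG.sub_C hpos β)
    (by rw [natDegree_sub_C, natDegree_sub_C, hdeg]) hsq
  rw [hsub, left_eq_add, C_eq_zero] at hsq
  exact ⟨hsub, by linear_combination -hsq⟩

theorem monic_compList_and_natDegree_eq_two_pow {l : List R[X]}
    (hl : ∀ g ∈ l, ∃ b c, g = (X - C b) ^ 2 + C c) :
    (compList l).Monic ∧ (compList l).natDegree = 2 ^ l.length := by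
  have hquad : ∀ g ∈ l, g.Monic ∧ g.natDegree = 2 := fun g hg => by
    obtain ⟨b, c, rfl⟩ := hl g hg
    exact ⟨monic_sq_add_C b c, natDegree_sq_add_C b c⟩
  exact ⟨monic_compList fun g hg => ⟨(hquad g hg).1, by simp [(hquad g hg).2]⟩,
    natDegree_compList_of_forall_natDegree_eq fun g hg => (hquad g hg).2⟩

theorem compList_sub_C_eq_of_compList_cons_eq (two : (2 : R) ≠ 0) {l₁ l₂ : List R[X]}
    (hl₁ : ∀ g ∈ l₁, ∃ b c, g = (X - C b) ^ 2 + C c)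
    (hl₂ : ∀ g ∈ l₂, ∃ b c, g = (X - C b) ^ 2 + C c)
    (hlen : l₁.length = l₂.length) {b c β γ t : R}
    (h : compList (((X - C b) ^ 2 + C c) :: l₁) = compList (((X - C β) ^ 2 + C γ) :: l₂) + C t) :
    compList l₁ - C b = compList l₂ - C β ∧ c = γ + t := by
  obtain ⟨hmonic₁, hdeg₁⟩ := monic_compList_and_natDegree_eq_two_pow hl₁
  obtain ⟨hmonic₂, hdeg₂⟩ := monic_compList_and_natDegree_eq_two_pow hl₂
  exact sub_C_eq_of_sq_add_C_comp_eq two hmonic₁ hmonic₂ (by rw [hdeg₁, hdeg₂, hlen])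
    (by rw [hdeg₂]; positivity) h

theorem eq_zero_of_compList_eq_compList_add_C (two : (2 : R) ≠ 0) {c : R} {l₁ l₂ : List R[X]}
    (hl₁ : ∀ g ∈ l₁, ∃ b, g = (X - C b) ^ 2 + C c) (hl₂ : ∀ g ∈ l₂, ∃ b, g = (X - C b) ^ 2 + C c)
    (hlen : l₁.length = l₂.length) {s : R} (h : compList l₁ = compList l₂ + C s) : s = 0 := by
  rcases l₁ with _ | ⟨g, l₁⟩ <;> rcases l₂ with _ | ⟨k, l₂⟩
  · simpa using h
  · simp at hlen
  · simp at hlen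
  obtain ⟨b, rfl⟩ := hl₁ g List.mem_cons_self
  obtain ⟨β, rfl⟩ := hl₂ k List.mem_cons_self
  have hc := compList_sub_C_eq_of_compList_cons_eq two
    (fun g hg => (hl₁ g (List.mem_cons_of_mem _ hg)).imp fun b hb => ⟨c, hb⟩)
    (fun g hg => (hl₂ g (List.mem_cons_of_mem _ hg)).imp fun b hb => ⟨c, hb⟩)
    (by simpa using hlen) h
  simpa using hc.2

theorem head_eq_and_compList_eq_of_compList_cons_eq (two : (2 : R) ≠ 0) {f₁ f₂ : R[X]}
    (hf₁ : ∃ b c, f₁ = (X - C b) ^ 2 + C c) (hf₂ : ∃ b c, f₂ = (X - C b) ^ 2 + C c)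
    {h k : R[X]} {l₁ l₂ : List R[X]} (hh : h = f₁ ∨ h = f₂) (hk : k = f₁ ∨ k = f₂)
    (hl₁ : ∀ g ∈ l₁, g = f₁ ∨ g = f₂) (hl₂ : ∀ g ∈ l₂, g = f₁ ∨ g = f₂)
    (hlen : l₁.length = l₂.length) (heq : compList (h :: l₁) = compList (k :: l₂)) :
    h = k ∧ compList l₁ = compList l₂ := by
  have hvertex (g : R[X]) (hg : g = f₁ ∨ g = f₂) : ∃ b c, g = (X - C b) ^ 2 + C c := by
    rcases hg with rfl | rfl <;> assumption
  have hpeel (b c β γ : R)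
      (h : compList (((X - C b) ^ 2 + C c) :: l₁) = compList (((X - C β) ^ 2 + C γ) :: l₂)) :
      compList l₁ - C b = compList l₂ - C β ∧ c = γ := by
    simpa using compList_sub_C_eq_of_compList_cons_eq two (fun g hg => hvertex g (hl₁ g hg))
      (fun g hg => hvertex g (hl₂ g hg)) hlen (t := 0) (by rwa [C_0, add_zero])
  obtain ⟨b, c, rfl⟩ := hvertex h hh
  by_cases hhk : (X - C b) ^ 2 + C c = k
  · subst hhk
    exact ⟨rfl, sub_left_inj.mp (hpeel _ _ _ _ heq).1⟩
  obtain ⟨β, γ, rfl⟩ := hvertex k hk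
  obtain ⟨htail, hc⟩ := hpeel _ _ _ _ heq
  subst hc
  have hordinate (g : R[X]) (hg : g = f₁ ∨ g = f₂) : ∃ b', g = (X - C b') ^ 2 + C c := by
    -- the two distinct heads are `f₁` and `f₂` in some order
    have hheads : g = (X - C b) ^ 2 + C c ∨ g = (X - C β) ^ 2 + C c := by grind
    exact hheads.elim (⟨b, ·⟩) (⟨β, ·⟩)
  have hshift := eq_zero_of_compList_eq_compList_add_C two (s := b - β)
    (fun g hg => hordinate g (hl₁ g hg)) (fun g hg => hordinate g (hl₂ g hg)) hlen
    (by rw [map_sub]; linear_combination htail)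
  exact absurd (by rw [sub_eq_zero.mp hshift]) hhk

theorem eq_of_compList_eq (two : (2 : R) ≠ 0) {f₁ f₂ : R[X]}
    (hf₁ : ∃ b c, f₁ = (X - C b) ^ 2 + C c) (hf₂ : ∃ b c, f₂ = (X - C b) ^ 2 + C c)
    {l₁ l₂ : List R[X]} (hl₁ : ∀ g ∈ l₁, g = f₁ ∨ g = f₂) (hl₂ : ∀ g ∈ l₂, g = f₁ ∨ g = f₂)
    (heq : compList l₁ = compList l₂) : l₁ = l₂ := by
  have hvertex (g : R[X]) (hg : g = f₁ ∨ g = f₂) : ∃ b c, g = (X - C b) ^ 2 + C c := by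
    rcases hg with rfl | rfl <;> assumption
  have hlen : l₁.length = l₂.length := by
    have hdeg := congrArg natDegree heq
    rw [(monic_compList_and_natDegree_eq_two_pow fun g hg => hvertex g (hl₁ g hg)).2,
      (monic_compList_and_natDegree_eq_two_pow fun g hg => hvertex g (hl₂ g hg)).2] at hdeg
    exact Nat.pow_right_injective le_rfl hdeg
  induction l₁ generalizing l₂ with
  | nil => exact (List.length_eq_zero_iff.mp hlen.symm).symm
  | cons h l₁ ih =>
    obtain _ | ⟨k, l₂⟩ := l₂
    · simp at hlen
    rw [List.forall_mem_cons] at hl₁ hl₂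
    rw [List.length_cons, List.length_cons, Nat.succ_inj] at hlen
    obtain ⟨rfl, htail⟩ := head_eq_and_compList_eq_of_compList_cons_eq two hf₁ hf₂ hl₁.1 hl₂.1
      hl₁.2 hl₂.2 hlen heq
    rw [ih hl₁.2 hl₂.2 htail hlen]

end CommRing

theorem Monic.exists_eq_sq_add_C {F : Type*} [Field F] (two : (2 : F) ≠ 0) {f : F[X]}
    (hf : f.Monic) (hdeg : f.natDegree = 2) : ∃ b c, f = (X - C b) ^ 2 + C c := by
  obtain ⟨b, hb⟩ : ∃ b, f.coeff 1 = -2 * b := ⟨-f.coeff 1 / 2, by field_simp⟩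
  refine ⟨b, f.coeff 0 - b ^ 2, ?_⟩
  have hcoeff₂ : f.coeff 2 = 1 := hdeg ▸ hf.coeff_natDegree
  conv_lhs => rw [f.as_sum_range' 3 (by omega)]
  simp only [Finset.sum_range_succ, Finset.sum_range_zero, hcoeff₂, hb,
    ← C_mul_X_pow_eq_monomial, map_mul, map_neg, map_ofNat, map_sub, map_pow, map_one]
  ring

end Polynomial

theorem composition_of_two_quadratics_unique_general (F : Type*) [Field F] [Fintype F]
    (hodd : Odd (Fintype.card F))
    (f₁ f₂ : F[X])
    (h₁m : f₁.Monic) (h₁d : f₁.natDegree = 2)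
    (h₂m : f₂.Monic) (h₂d : f₂.natDegree = 2)
    (l₁ l₂ : List F[X])
    (hl₁ : ∀ g ∈ l₁, g = f₁ ∨ g = f₂) (hl₂ : ∀ g ∈ l₂, g = f₁ ∨ g = f₂)
    (heq : l₁.foldr (fun a b => a.comp b) X = l₂.foldr (fun a b => a.comp b) X) :
    l₁ = l₂ := by
  have two : (2 : F) ≠ 0 := Ring.two_ne_zero fun hchar => by
    have := FiniteField.even_card_of_char_two hchar
    rw [Nat.odd_iff] at hodd
    omega
  exact eq_of_compList_eq two (h₁m.exists_eq_sq_add_C two h₁d) (h₂m.exists_eq_sq_add_C two h₂d)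
    hl₁ hl₂ heq

theorem composition_of_two_quadratics_unique (F : Type*) [Field F] [Fintype F]
    (hodd : Odd (Fintype.card F))
    (f₁ f₂ : F[X]) (hne : f₁ ≠ f₂)
    (h₁m : f₁.Monic) (h₁d : f₁.natDegree = 2)
    (h₂m : f₂.Monic) (h₂d : f₂.natDegree = 2)
    (l₁ l₂ : List F[X])
    (hl₁ : ∀ g ∈ l₁, g = f₁ ∨ g = f₂) (hl₂ : ∀ g ∈ l₂, g = f₁ ∨ g = f₂)
    (heq : l₁.foldr (fun a b => a.comp b) X = l₂.foldr (fun a b => a.comp b) X) :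
    l₁ = l₂ :=
  composition_of_two_quadratics_unique_general F hodd f₁ f₂ h₁m h₁d h₂m h₂d l₁ l₂ hl₁ hl₂ heq
end

section
/- Let q ≡ 1 (mod 4) be a prime power and a ∈ 𝔽_q such that both a and a+1 are non-squares in 𝔽_q. Then the two polynomials f(X) = (X − a)² + a and g(X) = (X − a − 1)² + a form a dynamically-irreducible set over 𝔽_q: every composition of f's and g's is irreducible. -/
/-!
By Capelli's lemma (`Polynomial.irreducible_comp`), for monic irreducible `Q` with a root `x`,
`Q ∘ ((X - b)² + c)` is irreducible as soon as `x - c` is a nonsquare in `K(x)`. The norm of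
`x - c` down to `K` is `(-1)^(deg Q) · Q(c)` and norms of squares are squares, so it suffices that
`(-1)^(deg Q) · Q(c)` be a nonsquare in `K`. For `f` and `g` the constant is `c = a`, both maps
permute `{a, a + 1}`, so every iterate sends `a` to one of the nonsquares `a`, `a + 1`; and `-1`
is a square in `𝔽_q` because `q ≡ 1 [MOD 4]`.
-/

open Polynomial

theorem not_isSquare_neg_one_pow_mul {M : Type*} [CommMonoid M] [HasDistribNeg M]
    (h : IsSquare (-1 : M)) (n : ℕ) {y : M} (hy : ¬IsSquare y) : ¬IsSquare ((-1) ^ n * y) := by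
  intro hsq
  apply hy
  simpa [← mul_assoc, ← mul_pow] using (h.pow n).mul hsq

theorem Algebra.PowerBasis.norm_gen_sub_algebraMap {R S : Type*} [CommRing R] [Ring S]
    [Algebra R S] (pb : PowerBasis R S) (c : R) :
    Algebra.norm R (pb.gen - algebraMap R S c) = (-1) ^ pb.dim * (minpoly R pb.gen).eval c := by
  rw [Algebra.norm_eq_matrix_det pb.basis, map_sub, AlgHom.commutes, ← neg_sub, Matrix.det_neg,
    Fintype.card_fin, ← charpoly_leftMulMatrix, Matrix.eval_charpoly, Matrix.algebraMap_eq_diagonal]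
  rfl

namespace Polynomial

section CommSemiring

variable {R : Type*} [CommSemiring R]

theorem foldr_comp_append_singleton (l : List R[X]) (p : R[X]) :
    (l ++ [p]).foldr (fun u v => u.comp v) X = (l.foldr (fun u v => u.comp v) X).comp p := by
  induction l with
  | nil => simp
  | cons q l ih => simp only [List.cons_append, List.foldr_cons, ih, comp_assoc]

theorem monic_foldr_comp {l : List R[X]} (hl : ∀ p ∈ l, p.Monic ∧ p.natDegree ≠ 0) :
    (l.foldr (fun u v => u.comp v) X).Monic := by
  induction l using List.reverseRecOn with
  | nil => exact monic_X
  | append_singleton l p ih =>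
    obtain ⟨hp, hp_deg⟩ := hl p (by simp)
    rw [foldr_comp_append_singleton]
    exact (ih fun q hq => hl q (by simp [hq])).comp hp hp_deg

theorem mapsTo_eval_foldr_comp {T : Set R} {l : List R[X]}
    (hl : ∀ p ∈ l, Set.MapsTo (fun t => p.eval t) T T) :
    Set.MapsTo (fun t => (l.foldr (fun u v => u.comp v) X).eval t) T T := by
  induction l with
  | nil =>
    simp only [List.foldr_nil, eval_X]
    exact Set.mapsTo_id T
  | cons p l ih =>
    simp only [List.foldr_cons, eval_comp]
    exact (hl p List.mem_cons_self).comp (ih fun q hq => hl q (List.mem_cons_of_mem p hq))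

end CommSemiring

variable {K : Type*} [Field K]

theorem monic_X_sub_C_sq_add_C (b c : K) : ((X - C b) ^ 2 + C c).Monic := by
  monicity!

theorem natDegree_X_sub_C_sq_add_C (b c : K) : ((X - C b) ^ 2 + C c).natDegree = 2 := by
  compute_degree!

theorem irreducible_X_sub_C_sq_sub_C {b d : K} (hd : ¬IsSquare d) :
    Irreducible ((X - C b) ^ 2 - C d) := by
  have htaylor : taylorEquiv (-b) (X ^ 2 - C d) = (X - C b) ^ 2 - C d := by
    show taylor (-b) _ = _
    simp [taylor_apply, sub_eq_add_neg]
  rw [← htaylor]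
  exact (X_pow_sub_C_irreducible_of_prime Nat.prime_two fun e he => hd ⟨e, by rw [← he, sq]⟩).map _

open IntermediateField in
theorem irreducible_comp_X_sub_C_sq_add_C {Q : K[X]} (hQm : Q.Monic) (hQ : Irreducible Q)
    (b c : K) (hc : ¬IsSquare ((-1) ^ Q.natDegree * Q.eval c)) :
    Irreducible (Q.comp ((X - C b) ^ 2 + C c)) := by
  refine irreducible_comp hQm (monic_X_sub_C_sq_add_C b c) hQ fun E _ _ x hx => ?_
  have hx_int : IsIntegral K x := by
    by_contra h
    exact hQm.ne_zero (hx ▸ minpoly.eq_zero h)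
  let pb := adjoin.powerBasis hx_int
  have hgen : pb.gen = AdjoinSimple.gen K x := adjoin.powerBasis_gen hx_int
  have hnorm : Algebra.norm K (pb.gen - algebraMap K K⟮x⟯ c) = (-1) ^ Q.natDegree * Q.eval c := by
    rw [Algebra.PowerBasis.norm_gen_sub_algebraMap, adjoin.powerBasis_dim, hgen, minpoly_gen, hx]
  have hquad : ((X - C b) ^ 2 + C c).map (algebraMap K K⟮x⟯) - C (AdjoinSimple.gen K x) =
      (X - C (algebraMap K K⟮x⟯ b)) ^ 2 - C (pb.gen - algebraMap K K⟮x⟯ c) := by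
    simp only [Polynomial.map_add, Polynomial.map_pow, Polynomial.map_sub, map_X, map_C, C_sub,
      hgen]
    ring
  rw [hquad]
  refine irreducible_X_sub_C_sq_sub_C fun ⟨z, hz⟩ => hc ⟨Algebra.norm K z, ?_⟩
  rw [← hnorm, hz, map_mul]

theorem irreducible_foldr_comp_of_not_isSquare {S : Set K[X]}
    (hS : ∀ f ∈ S, ∃ b c, f = (X - C b) ^ 2 + C c ∧ ∀ l : List K[X], (∀ g ∈ l, g ∈ S) →
      ¬IsSquare ((-1) ^ (l.foldr (fun u v => u.comp v) X).natDegree *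
        (l.foldr (fun u v => u.comp v) X).eval c))
    {l : List K[X]} (hl : ∀ g ∈ l, g ∈ S) : Irreducible (l.foldr (fun u v => u.comp v) X) := by
  induction l using List.reverseRecOn with
  | nil => exact irreducible_X
  | append_singleton l f ih =>
    have hl' : ∀ g ∈ l, g ∈ S := fun g hg => hl g (by simp [hg])
    obtain ⟨b, c, rfl, hc⟩ := hS f (hl f (by simp))
    have hmonic : (l.foldr (fun u v => u.comp v) X).Monic := monic_foldr_comp fun g hg => by
      obtain ⟨b', c', rfl, -⟩ := hS g (hl' g hg)
      exact ⟨monic_X_sub_C_sq_add_C b' c', by rw [natDegree_X_sub_C_sq_add_C]; norm_num⟩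
    rw [foldr_comp_append_singleton]
    exact irreducible_comp_X_sub_C_sq_add_C hmonic (ih hl') b c (hc l hl')

end Polynomial

theorem pair_dyn_irr_of_nonsquares (F : Type*) [Field F] [Fintype F]
    (hq : Fintype.card F % 4 = 1)
    (a : F) (ha : ¬ IsSquare a) (ha1 : ¬ IsSquare (a + 1)) :
    ∀ l : List F[X], l ≠ [] →
      (∀ g ∈ l, g = (X - C a) ^ 2 + C a ∨ g = (X - C (a + 1)) ^ 2 + C a) →
      Irreducible (l.foldr (fun u v => u.comp v) X) := by
  intro l _ hl
  set S : Set F[X] := {(X - C a) ^ 2 + C a, (X - C (a + 1)) ^ 2 + C a}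
  have hS_mapsTo : ∀ f ∈ S, Set.MapsTo (fun t => f.eval t) {a, a + 1} {a, a + 1} := by
    rintro f (rfl | rfl) t (rfl | rfl) <;> simp [add_comm]
  have hneg_one : IsSquare (-1 : F) := FiniteField.isSquare_neg_one_iff.mpr (by omega)
  have hiterate_nonsq : ∀ l' : List F[X], (∀ g ∈ l', g ∈ S) →
      ¬IsSquare ((-1) ^ (l'.foldr (fun u v => u.comp v) X).natDegree *
        (l'.foldr (fun u v => u.comp v) X).eval a) := by
    intro l' hl'
    refine not_isSquare_neg_one_pow_mul hneg_one _ ?_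
    obtain h | h : (l'.foldr (fun u v => u.comp v) X).eval a = a ∨
        (l'.foldr (fun u v => u.comp v) X).eval a = a + 1 :=
      mapsTo_eval_foldr_comp (fun f hf => hS_mapsTo f (hl' f hf)) (Set.mem_insert a _)
    · rwa [h]
    · rwa [h]
  refine irreducible_foldr_comp_of_not_isSquare (S := S) ?_ hl
  rintro f (rfl | rfl)
  exacts [⟨a, a, rfl, hiterate_nonsq⟩, ⟨a + 1, a, rfl, hiterate_nonsq⟩]
end

section
/- Over 𝔽_3, the polynomial f(X) = X² + 1 is dynamically-irreducible: every iterate f^{(n)}(X) is irreducible over 𝔽_3. -/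
set_option maxHeartbeats 1000000

open Polynomial Module

section Helpers

variable {K L : Type*} [Field K] [Field L] [Algebra K L]

/-- A power basis of `L` generated by `x` when `x` generates `L` as a `K`-algebra. -/
noncomputable def pbOfGenTop (x : L) (hx : IsIntegral K x)
    (hgen : Algebra.adjoin K ({x} : Set L) = ⊤) : PowerBasis K L :=
  (Algebra.adjoin.powerBasis hx).map
    ((Subalgebra.equivOfEq _ _ hgen).trans Subalgebra.topEquiv)

lemma pbOfGenTop_gen (x : L) (hx : IsIntegral K x)
    (hgen : Algebra.adjoin K ({x} : Set L) = ⊤) : (pbOfGenTop x hx hgen).gen = x := by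
  simp [pbOfGenTop, Algebra.adjoin.powerBasis]

/-- If `α` is a generator with monic minimal polynomial `p` and
`(-1)^(deg p) * p(1)` is not a square in the base field, then `α - 1` is not a square. -/
lemma nonsquare_sub_one [Module.Finite K L] {p : K[X]} (α : L)
    (hαgen : Algebra.adjoin K ({α} : Set L) = ⊤)
    (hminα : minpoly K α = p)
    (hns : ¬ IsSquare ((-1) ^ p.natDegree * p.eval 1)) :
    ¬ IsSquare (α - 1) := by
  have hγint : IsIntegral K (α - 1) := IsIntegral.of_finite K _
  have hγgen : Algebra.adjoin K ({α - 1} : Set L) = ⊤ := by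
    rw [eq_top_iff, ← hαgen, Algebra.adjoin_le_iff, Set.singleton_subset_iff]
    have h2 : α - 1 ∈ Algebra.adjoin K ({α - 1} : Set L) :=
      Algebra.subset_adjoin (Set.mem_singleton _)
    have h3 : (α - 1) + 1 ∈ Algebra.adjoin K ({α - 1} : Set L) := add_mem h2 (one_mem _)
    simpa using h3
  have hminγ : minpoly K (α - 1) = p.comp (X + C 1) := by
    have h1 : α - 1 = α - algebraMap K L 1 := by simp
    rw [h1, minpoly.sub_algebraMap, hminα]
  have hnorm : Algebra.norm K (α - 1) = (-1) ^ p.natDegree * p.eval 1 := by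
    have h1 := Algebra.PowerBasis.norm_gen_eq_coeff_zero_minpoly (pbOfGenTop (α - 1) hγint hγgen)
    rw [pbOfGenTop_gen] at h1
    have h2 := PowerBasis.natDegree_minpoly (pbOfGenTop (α - 1) hγint hγgen)
    rw [pbOfGenTop_gen, hminγ, natDegree_comp, natDegree_X_add_C, mul_one] at h2
    rw [h1, ← h2, hminγ, coeff_zero_eq_eval_zero, eval_comp]
    simp
  intro h
  exact hns (hnorm ▸ h.map (Algebra.norm K))

end Helpers

/-- Abstract key lemma: if `β` lies in a quadratic extension `M` of `L = K(α)` with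
`β² + 1 = α`, then `p ∘ (X² + 1)` is irreducible over `K`, where `p = minpoly K α`. -/
lemma key_irred {K L M : Type*} [Field K] [Field L] [Field M] [Algebra K L] [Algebra L M]
    [Algebra K M] [IsScalarTower K L M] [Module.Finite K L] [Module.Finite L M]
    {p : K[X]} (hmo : p.Monic) (α : L) (β : M)
    (hαgen : Algebra.adjoin K ({α} : Set L) = ⊤)
    (hβgen : Algebra.adjoin L ({β} : Set M) = ⊤)
    (hβsq : β ^ 2 + 1 = algebraMap L M α)
    (hminα : minpoly K α = p)
    (hfrL : finrank K L = p.natDegree)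
    (hfrM : finrank L M = 2) :
    Irreducible (p.comp (X ^ 2 + 1)) := by
  haveI : Module.Finite K M := Module.Finite.trans L M
  have hβint : IsIntegral K β := IsIntegral.of_finite K β
  have haeval : aeval β (p.comp (X ^ 2 + 1)) = 0 := by
    rw [aeval_comp]
    have h1 : aeval β (X ^ 2 + 1 : K[X]) = algebraMap L M α := by
      rw [map_add, map_one, map_pow, aeval_X, hβsq]
    rw [h1, aeval_algebraMap_apply]
    have h2 : aeval α p = 0 := by rw [← hminα]; exact minpoly.aeval K α
    rw [h2, map_zero]
  have hβmem : β ∈ Algebra.adjoin K ({β} : Set M) := Algebra.subset_adjoin rfl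
  have hβmem2 : β ^ 2 ∈ Algebra.adjoin K ({β} : Set M) := pow_mem hβmem 2
  have hβmem3 : β ^ 2 + 1 ∈ Algebra.adjoin K ({β} : Set M) := add_mem hβmem2 (one_mem _)
  have hmap : ∀ l : L, algebraMap L M l ∈ Algebra.adjoin K ({β} : Set M) := by
    intro l
    have hl : l ∈ Algebra.adjoin K ({α} : Set L) := by rw [hαgen]; trivial
    induction hl using Algebra.adjoin_induction with
    | mem x hx =>
      rw [Set.mem_singleton_iff] at hx
      subst hx
      rw [← hβsq]
      exact hβmem3
    | algebraMap k =>
      have h5 := Subalgebra.algebraMap_mem (Algebra.adjoin K ({β} : Set M)) k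
      rwa [IsScalarTower.algebraMap_apply K L M] at h5
    | add x y hx hy ihx ihy =>
      rw [map_add]; exact add_mem ihx ihy
    | mul x y hx hy ihx ihy =>
      rw [map_mul]; exact mul_mem ihx ihy
  have hβgenK : Algebra.adjoin K ({β} : Set M) = ⊤ := by
    rw [eq_top_iff]
    intro m hmem
    clear hmem
    have hm' : m ∈ Algebra.adjoin L ({β} : Set M) := by rw [hβgen]; trivial
    induction hm' using Algebra.adjoin_induction with
    | mem x hx =>
      rw [Set.mem_singleton_iff] at hx
      exact hx ▸ hβmem
    | algebraMap l => exact hmap l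
    | add x y hx hy ihx ihy => exact add_mem ihx ihy
    | mul x y hx hy ihx ihy => exact mul_mem ihx ihy
  have hdim : (minpoly K β).natDegree = finrank K M := by
    have h1 := PowerBasis.natDegree_minpoly (pbOfGenTop β hβint hβgenK)
    rw [pbOfGenTop_gen] at h1
    rw [h1, (pbOfGenTop β hβint hβgenK).finrank]
  have hfr : finrank K M = p.natDegree * 2 := by
    rw [← Module.finrank_mul_finrank K L M, hfrL, hfrM]
  have hGdeg : (p.comp (X ^ 2 + 1)).natDegree = p.natDegree * 2 := by
    rw [natDegree_comp]
    congr 1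
    have h : (X ^ 2 + 1 : K[X]) = X ^ 2 + C 1 := by rw [map_one]
    rw [h, natDegree_X_pow_add_C]
  have hGmonic : (p.comp (X ^ 2 + 1)).Monic := by
    apply hmo.comp
    · have h : (X ^ 2 + 1 : K[X]) = X ^ 2 + C 1 := by rw [map_one]
      rw [h]; exact monic_X_pow_add_C 1 (by norm_num)
    · have h : (X ^ 2 + 1 : K[X]) = X ^ 2 + C 1 := by rw [map_one]
      rw [h, natDegree_X_pow_add_C]; norm_num
  obtain ⟨c, hc⟩ := minpoly.dvd K β haeval
  have hmmon := minpoly.monic hβint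
  have hc0 : c ≠ 0 := by
    rintro rfl
    rw [mul_zero] at hc
    exact hGmonic.ne_zero hc
  have hcdeg : c.natDegree = 0 := by
    have h1 : (p.comp (X ^ 2 + 1)).natDegree = (minpoly K β).natDegree + c.natDegree := by
      rw [hc, natDegree_mul hmmon.ne_zero hc0]
    rw [hGdeg, hdim, hfr] at h1
    omega
  have hcval : c = 1 := by
    have h2 : c.leadingCoeff = 1 := by
      have h4 := hGmonic
      rw [Monic, hc, leadingCoeff_mul, hmmon.leadingCoeff, one_mul] at h4
      exact h4
    have h3 := Polynomial.eq_C_of_natDegree_eq_zero hcdeg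
    rw [leadingCoeff, hcdeg] at h2
    rw [h3, h2, map_one]
  have hfinal : minpoly K β = p.comp (X ^ 2 + 1) := by rw [hc, hcval, mul_one]
  rw [← hfinal]
  exact minpoly.irreducible hβint

theorem main_comp {K : Type*} [Field K] {p : K[X]} (hp : Irreducible p) (hm : p.Monic)
    (hns : ¬ IsSquare ((-1) ^ p.natDegree * p.eval 1)) :
    Irreducible (p.comp (X ^ 2 + 1)) := by
  have hp0 : p ≠ 0 := hm.ne_zero
  haveI := Fact.mk hp
  set L := AdjoinRoot p with hL
  set α := AdjoinRoot.root p with hα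
  haveI : Module.Finite K L := (AdjoinRoot.powerBasis hp0).finite
  have hminα : minpoly K α = p := by
    rw [AdjoinRoot.minpoly_root hp0, hm.leadingCoeff, inv_one, map_one, mul_one]
  have hαgen : Algebra.adjoin K ({α} : Set L) = ⊤ := AdjoinRoot.adjoinRoot_eq_top
  have hγns : ¬ IsSquare (α - 1) := nonsquare_sub_one α hαgen hminα hns
  have hh : Irreducible (X ^ 2 - C (α - 1) : L[X]) :=
    X_pow_sub_C_irreducible_of_prime Nat.prime_two
      (fun b hb => hγns ⟨b, by rw [← hb]; ring⟩)
  haveI := Fact.mk hh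
  have hh0 : (X ^ 2 - C (α - 1) : L[X]) ≠ 0 := hh.ne_zero
  have hβsq : (AdjoinRoot.root (X ^ 2 - C (α - 1) : L[X])) ^ 2 + 1
      = algebraMap L (AdjoinRoot (X ^ 2 - C (α - 1) : L[X])) α := by
    have h1 := AdjoinRoot.eval₂_root (X ^ 2 - C (α - 1) : L[X])
    rw [eval₂_sub, eval₂_pow, eval₂_X, eval₂_C, sub_eq_zero] at h1
    rw [h1, ← AdjoinRoot.algebraMap_eq]
    simp only [map_sub, map_one]
    ring
  haveI : Module.Finite L (AdjoinRoot (X ^ 2 - C (α - 1) : L[X])) :=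
    (AdjoinRoot.powerBasis hh0).finite
  have hβgen : Algebra.adjoin L ({AdjoinRoot.root (X ^ 2 - C (α - 1) : L[X])} :
      Set (AdjoinRoot (X ^ 2 - C (α - 1) : L[X]))) = ⊤ := AdjoinRoot.adjoinRoot_eq_top
  have hfrL : finrank K L = p.natDegree := by
    rw [(AdjoinRoot.powerBasis hp0).finrank]
    rfl
  have hfrM : finrank L (AdjoinRoot (X ^ 2 - C (α - 1) : L[X])) = 2 := by
    rw [(AdjoinRoot.powerBasis hh0).finrank]
    show (X ^ 2 - C (α - 1) : L[X]).natDegree = 2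
    rw [natDegree_X_pow_sub_C]
  exact key_irred hm α _ hαgen hβgen hβsq hminα hfrL hfrM

lemma monic_inner {K : Type*} [Field K] : (X ^ 2 + 1 : K[X]).Monic := by
  have h : (X ^ 2 + 1 : K[X]) = X ^ 2 + C 1 := by rw [map_one]
  rw [h]; exact monic_X_pow_add_C 1 (by norm_num)

lemma natDegree_inner {K : Type*} [Field K] : (X ^ 2 + 1 : K[X]).natDegree = 2 := by
  have h : (X ^ 2 + 1 : K[X]) = X ^ 2 + C 1 := by rw [map_one]
  rw [h, natDegree_X_pow_add_C]

theorem x_sq_add_one_dyn_irr_mod_three :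
    ∀ n : ℕ, 1 ≤ n →
      Irreducible ((fun g : (ZMod 3)[X] => g.comp (X ^ 2 + 1))^[n] X) := by
  suffices key : ∀ n : ℕ, 1 ≤ n →
      Irreducible ((fun g : (ZMod 3)[X] => g.comp (X ^ 2 + 1))^[n] X) ∧
      ((fun g : (ZMod 3)[X] => g.comp (X ^ 2 + 1))^[n] X).Monic ∧
      Even (((fun g : (ZMod 3)[X] => g.comp (X ^ 2 + 1))^[n] X).natDegree) ∧
      (((fun g : (ZMod 3)[X] => g.comp (X ^ 2 + 1))^[n] X).eval 1 = 2) ∧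
      (((fun g : (ZMod 3)[X] => g.comp (X ^ 2 + 1))^[n] X).eval 2 = 2) by
    exact fun n hn => (key n hn).1
  intro n hn
  induction n with
  | zero => omega
  | succ m ih =>
    rcases Nat.eq_zero_or_pos m with hm0 | hm1
    · subst hm0
      simp only [zero_add, Function.iterate_one]
      refine ⟨?_, ?_, ?_, ?_, ?_⟩
      · exact main_comp irreducible_X monic_X (by
          rw [natDegree_X, eval_X, pow_one, mul_one]
          decide)
      · exact monic_X.comp monic_inner (by rw [natDegree_inner]; norm_num)
      · rw [natDegree_comp, natDegree_X, natDegree_inner]; decide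
      · rw [X_comp]
        simp only [eval_add, eval_pow, eval_X, eval_one]
        decide
      · rw [X_comp]
        simp only [eval_add, eval_pow, eval_X, eval_one]
        decide
    · obtain ⟨hirr, hmon, heven, he1, he2⟩ := ih hm1
      rw [Function.iterate_succ_apply']
      set q := (fun g : (ZMod 3)[X] => g.comp (X ^ 2 + 1))^[m] X with hq
      refine ⟨?_, ?_, ?_, ?_, ?_⟩
      · apply main_comp hirr hmon
        rw [heven.neg_one_pow, one_mul, he1]
        decide
      · exact hmon.comp monic_inner (by rw [natDegree_inner]; norm_num)
      · rw [natDegree_comp, natDegree_inner]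
        exact even_two.mul_left _
      · have h1 : eval (1 : ZMod 3) (X ^ 2 + 1 : (ZMod 3)[X]) = 2 := by
          simp only [eval_add, eval_pow, eval_X, eval_one]; decide
        rw [eval_comp, h1, he2]
      · have h1 : eval (2 : ZMod 3) (X ^ 2 + 1 : (ZMod 3)[X]) = 2 := by
          simp only [eval_add, eval_pow, eval_X, eval_one]; decide
        rw [eval_comp, h1, he2]
end

section
/- Let L ⊆ M be finite fields of odd characteristic and ξ ∈ M such that every element of L + ξ and L − ξ is a non-square in M. Then the polynomials f_{b,c}(X) = (X − b − ξ)² + c + ξ for (b,c) ∈ L² form a dynamically-irreducible set over M of size |L|². -/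
open Polynomial
open scoped IntermediateField

universe u_aux

section Aux

variable {K : Type*} [Field K] [Fintype K]

lemma aux_quad_monic {F : Type*} [Field F] (b c : F) :
    ((X - C b) ^ 2 + C c).Monic := by
  apply ((monic_X_sub_C b).pow 2).add_of_left
  rw [degree_pow, degree_X_sub_C]
  exact lt_of_le_of_lt degree_C_le (by norm_num)

lemma aux_quad_natDegree {F : Type*} [Field F] (b c : F) :
    ((X - C b) ^ 2 + C c).natDegree = 2 := by
  compute_degree!

lemma aux_quad_irr {F : Type*} [Field F] (b c : F) (h : ¬ IsSquare (-c)) :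
    Irreducible ((X - C b) ^ 2 + C c) := by
  have hdeg := aux_quad_natDegree b c
  rw [(aux_quad_monic b c).irreducible_iff_roots_eq_zero_of_degree_le_three
    (by omega) (by omega)]
  by_contra hr
  obtain ⟨r, hr⟩ := Multiset.exists_mem_of_ne_zero hr
  rw [mem_roots'] at hr
  have h0 : (r - b) ^ 2 + c = 0 := by
    have := hr.2
    simpa [IsRoot, eval_add, eval_pow, eval_sub] using this
  exact h ⟨r - b, by linear_combination -h0⟩

/-- Fixed points of `z ↦ z ^ |K|` in an extension of `K` lie in (the image of) `K`. -/
lemma aux_fixed {E : Type*} [Field E] [Algebra K E] (z : E)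
    (hz : z ^ Fintype.card K = z) : ∃ w : K, algebraMap K E w = z := by
  classical
  have hq1 : 1 < Fintype.card K := Fintype.one_lt_card
  have hPdeg : (X ^ Fintype.card K - X : E[X]).degree = Fintype.card K := by
    rw [sub_eq_add_neg, degree_add_eq_left_of_degree_lt, degree_X_pow]
    rw [degree_X_pow, degree_neg, degree_X]
    exact_mod_cast hq1
  have hP0 : (X ^ Fintype.card K - X : E[X]) ≠ 0 := by
    intro h
    rw [h, degree_zero] at hPdeg
    simp at hPdeg
  have hroot : ∀ w : K, (algebraMap K E w) ∈ (X ^ Fintype.card K - X : E[X]).roots := by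
    intro w
    rw [mem_roots hP0]
    simp [IsRoot, ← map_pow, FiniteField.pow_card]
  have hcard : (Finset.univ.image (algebraMap K E)).card = Fintype.card K := by
    rw [Finset.card_image_of_injective _ (algebraMap K E).injective, Finset.card_univ]
  have hsub : (Finset.univ.image (algebraMap K E)) ⊆
      (X ^ Fintype.card K - X : E[X]).roots.toFinset := by
    intro x hx
    rw [Finset.mem_image] at hx
    obtain ⟨w, _, rfl⟩ := hx
    exact Multiset.mem_toFinset.2 (hroot w)
  have hle : (X ^ Fintype.card K - X : E[X]).roots.toFinset.card ≤ Fintype.card K := by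
    refine le_trans (Multiset.toFinset_card_le _) (le_trans (card_roots' _) ?_)
    exact le_of_eq (natDegree_eq_of_degree_eq_some hPdeg)
  have heq := Finset.eq_of_subset_of_card_le hsub (by rw [hcard]; exact hle)
  have hzmem : z ∈ (X ^ Fintype.card K - X : E[X]).roots.toFinset := by
    rw [Multiset.mem_toFinset, mem_roots hP0]
    simp [IsRoot, hz]
  rw [← heq, Finset.mem_image] at hzmem
  obtain ⟨w, _, hw⟩ := hzmem
  exact ⟨w, hw⟩

lemma aux_geom (r d : ℕ) :
    r * (∑ i ∈ Finset.range d, (r + 1) ^ i) + 1 = (r + 1) ^ d := by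
  induction d with
  | zero => simp
  | succ n ih => rw [Finset.sum_range_succ, Nat.mul_add, pow_succ, ← ih]; ring

/-- Key nonsquare lemma: if `y` generates the finite extension `F/K`, has minimal
polynomial `H` of even degree, and `H(γ)` is a nonsquare in `K`, then `y - γ` is a
nonsquare in `F`. -/
lemma aux_nonsquare {F : Type*} [Field F] [Finite F] [Algebra K F]
    (hK2 : ringChar K ≠ 2) {H : K[X]} (hmon : H.Monic)
    (hde : Even H.natDegree) (hrank : Module.finrank K F = H.natDegree)
    (y : F) (hy : minpoly K y = H) (γ : K) (hns : ¬ IsSquare (H.eval γ)) :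
    ¬ IsSquare (y - algebraMap K F γ) := by
  classical
  cases nonempty_fintype F
  have hinj : Function.Injective (algebraMap K F) := (algebraMap K F).injective
  haveI hcp : CharP K (ringChar K) := ringChar.charP K
  obtain ⟨m, hpprime, hcard⟩ := FiniteField.card K (ringChar K)
  haveI : CharP F (ringChar K) := charP_of_injective_algebraMap hinj (ringChar K)
  haveI : ExpChar K (ringChar K) := ExpChar.prime hpprime
  haveI : ExpChar F (ringChar K) := ExpChar.prime hpprime
  have hq1 : 1 < Fintype.card K := Fintype.one_lt_card
  have hyint : IsIntegral K y := ⟨H, hmon, by rw [← hy]; exact minpoly.aeval K y⟩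
  have hd0 : H.natDegree ≠ 0 := by
    have := minpoly.natDegree_pos hyint
    rw [hy] at this
    omega
  have hcardF : Fintype.card F = Fintype.card K ^ H.natDegree := by
    rw [Module.card_eq_pow_finrank (K := K) (V := F), hrank]
  have hpow : ∀ (i : ℕ) (z : F),
      (iterateFrobenius F (ringChar K) ((m : ℕ) * i)) z = z ^ Fintype.card K ^ i := by
    intro i z
    rw [iterateFrobenius_def, pow_mul, ← hcard]
  have hsub : ∀ (i : ℕ) (a b : F),
      (a - b) ^ Fintype.card K ^ i = a ^ Fintype.card K ^ i - b ^ Fintype.card K ^ i := by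
    intro i a b
    have h := map_sub (iterateFrobenius F (ringChar K) ((m : ℕ) * i)) a b
    rwa [hpow, hpow, hpow] at h
  have hfixK : ∀ (w : K) (i : ℕ), w ^ Fintype.card K ^ i = w := by
    intro w i
    induction i with
    | zero => simp
    | succ n ih => rw [pow_succ, pow_mul, ih]; exact FiniteField.pow_card w
  set u : ℕ → F := fun i => y ^ Fintype.card K ^ i with hu
  have hud : u H.natDegree = u 0 := by
    simp only [hu]
    rw [← hcardF, FiniteField.pow_card, pow_zero, pow_one]
  set P : F[X] := ∏ i ∈ Finset.range H.natDegree, (X - C (u i)) with hPdef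
  have hPmonic : P.Monic := monic_prod_of_monic _ _ fun i _ => monic_X_sub_C _
  have hPdeg : P.natDegree = H.natDegree := by
    rw [hPdef, natDegree_prod_of_monic _ _ fun i _ => monic_X_sub_C _]
    simp
  have hφ : ∀ z : F, (iterateFrobenius F (ringChar K) ((m : ℕ) * 1)) z
      = z ^ Fintype.card K := by
    intro z
    rw [hpow, pow_one]
  have hPmap : P.map (iterateFrobenius F (ringChar K) ((m : ℕ) * 1)) = P := by
    rw [hPdef, Polynomial.map_prod]
    have h1 : ∀ i ∈ Finset.range H.natDegree,
        (X - C (u i)).map (iterateFrobenius F (ringChar K) ((m : ℕ) * 1))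
          = X - C (u (i + 1)) := by
      intro i _
      rw [Polynomial.map_sub, map_X, map_C]
      congr 1
      rw [hφ]
      simp only [hu]
      rw [← pow_mul, ← pow_succ]
    rw [Finset.prod_congr rfl h1]
    have e1 := Finset.prod_range_succ' (fun i => (X : F[X]) - C (u i)) H.natDegree
    have e2 := Finset.prod_range_succ (fun i => (X : F[X]) - C (u i)) H.natDegree
    rw [hud] at e2
    exact mul_right_cancel₀ (X_sub_C_ne_zero (u 0)) (e1.symm.trans e2)
  have hPco : ∀ n, (P.coeff n) ^ Fintype.card K = P.coeff n := by
    intro n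
    conv_rhs => rw [← hPmap]
    rw [coeff_map, hφ]
  obtain ⟨P₀, hP₀⟩ := (mem_lifts P).1 ((lifts_iff_coeff_lifts P).2 fun n =>
    aux_fixed (K := K) (P.coeff n) (hPco n))
  have hP₀deg : P₀.natDegree = H.natDegree := by
    rw [← hPdeg, ← hP₀, natDegree_map_eq_of_injective hinj]
  have hP₀monic : P₀.Monic := by
    rw [hinj.monic_map_iff, hP₀]
    exact hPmonic
  have haev : Polynomial.aeval y P₀ = 0 := by
    rw [aeval_def, ← eval_map, hP₀, hPdef, eval_prod]
    apply Finset.prod_eq_zero (Finset.mem_range.2 (Nat.pos_of_ne_zero hd0))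
    simp [hu]
  have hHdvd : H ∣ P₀ := hy ▸ minpoly.dvd K y haev
  have hHP₀ : P₀ = H := by
    obtain ⟨cfac, hc⟩ := hHdvd
    have hc0 : cfac ≠ 0 := by
      rintro rfl
      rw [mul_zero] at hc
      exact hP₀monic.ne_zero hc
    have hdeg2 : P₀.natDegree = H.natDegree + cfac.natDegree := by
      rw [hc, natDegree_mul hmon.ne_zero hc0]
    have hcd : cfac.natDegree = 0 := by omega
    have hcC := Polynomial.eq_C_of_natDegree_eq_zero hcd
    rw [hcC] at hc
    have ha : cfac.coeff 0 = 1 := by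
      have h3 := congrArg leadingCoeff hc
      rw [hP₀monic.leadingCoeff, leadingCoeff_mul, hmon.leadingCoeff, one_mul,
        leadingCoeff_C] at h3
      exact h3.symm
    rw [ha, map_one, mul_one] at hc
    exact hc
  have hPeval : algebraMap K F (H.eval γ)
      = ∏ i ∈ Finset.range H.natDegree, (algebraMap K F γ - u i) := by
    have h1 : (H.map (algebraMap K F)).eval (algebraMap K F γ)
        = algebraMap K F (H.eval γ) := by
      rw [eval_map, eval₂_at_apply]
    rw [← h1, ← hHP₀, hP₀, hPdef, eval_prod]
    simp only [eval_sub, eval_X, eval_C]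
    rw [hP₀deg]
  have hzt : (y - algebraMap K F γ) ^ (∑ i ∈ Finset.range H.natDegree, Fintype.card K ^ i)
      = algebraMap K F (H.eval γ) := by
    rw [← Finset.prod_pow_eq_pow_sum]
    have h2 : ∀ i ∈ Finset.range H.natDegree,
        (y - algebraMap K F γ) ^ Fintype.card K ^ i = u i - algebraMap K F γ := by
      intro i _
      rw [hsub]
      congr 1
      rw [← map_pow, hfixK]
    rw [Finset.prod_congr rfl h2, hPeval]
    have h3 : ∀ i ∈ Finset.range H.natDegree,
        (u i - algebraMap K F γ) = -1 * (algebraMap K F γ - u i) := by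
      intro i _
      ring
    rw [Finset.prod_congr rfl h3, Finset.prod_mul_distrib, Finset.prod_const,
      Finset.card_range, hde.neg_one_pow, one_mul]
  intro hsq
  have hw0 : H.eval γ ≠ 0 := fun h => hns (h ▸ ⟨0, by ring⟩)
  have ht0 : (∑ i ∈ Finset.range H.natDegree, Fintype.card K ^ i) ≠ 0 := by
    have h4 : Fintype.card K ^ 0 ≤ ∑ i ∈ Finset.range H.natDegree, Fintype.card K ^ i :=
      Finset.single_le_sum (f := fun i => Fintype.card K ^ i) (fun i _ => Nat.zero_le _)
        (Finset.mem_range.2 (Nat.pos_of_ne_zero hd0))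
    rw [pow_zero] at h4
    omega
  have hy0 : y - algebraMap K F γ ≠ 0 := by
    intro h
    have h5 := hzt
    rw [h, zero_pow ht0] at h5
    exact hw0 (hinj (h5.symm.trans (map_zero (algebraMap K F)).symm))
  have hqodd : Fintype.card K % 2 = 1 := FiniteField.odd_card_of_char_ne_two hK2
  have hgeom : (Fintype.card K - 1) * (∑ i ∈ Finset.range H.natDegree, Fintype.card K ^ i) + 1
      = Fintype.card K ^ H.natDegree := by
    have h5 : Fintype.card K - 1 + 1 = Fintype.card K := by omega
    have h6 := aux_geom (Fintype.card K - 1) H.natDegree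
    rwa [h5] at h6
  have hdiv : Fintype.card F / 2
      = (∑ i ∈ Finset.range H.natDegree, Fintype.card K ^ i) * (Fintype.card K / 2) := by
    have h7 : Fintype.card K - 1 = 2 * (Fintype.card K / 2) := by omega
    have h8 : Fintype.card F
        = 2 * ((∑ i ∈ Finset.range H.natDegree, Fintype.card K ^ i) * (Fintype.card K / 2))
          + 1 := by
      rw [hcardF, ← hgeom, h7]
      ring
    omega
  have hringF : ringChar F ≠ 2 := by
    rw [ringChar.eq F (ringChar K)]
    exact hK2
  have h9 : (y - algebraMap K F γ) ^ (Fintype.card F / 2) = 1 :=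
    (FiniteField.isSquare_iff hringF hy0).1 hsq
  rw [hdiv, pow_mul, hzt, ← map_pow] at h9
  have h10 : (H.eval γ) ^ (Fintype.card K / 2) = 1 :=
    hinj (h9.trans (map_one (algebraMap K F)).symm)
  exact hns ((FiniteField.isSquare_iff hK2 hw0).2 h10)

/-- The inductive step: composing an irreducible polynomial of even degree with a
monic quadratic stays irreducible provided the critical value is a nonsquare. -/
lemma aux_step {K : Type u_aux} [Field K] [Fintype K] (hK2 : ringChar K ≠ 2)
    {H : K[X]} (hmon : H.Monic) (hirr : Irreducible H) (hde : Even H.natDegree)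
    (β γ : K) (hns : ¬ IsSquare (H.eval γ)) :
    Irreducible (H.comp ((X - C β) ^ 2 + C γ)) := by
  apply Polynomial.irreducible_comp hmon (aux_quad_monic β γ) hirr
  intro E _ _ x hx
  have hint : IsIntegral K x := ⟨H, hmon, by rw [← hx]; exact minpoly.aeval K x⟩
  letI : Field (↥K⟮x⟯) := inferInstance
  haveI := IntermediateField.adjoin.finiteDimensional hint
  haveI : Finite (↥K⟮x⟯) := Module.finite_of_finite K
  have hgen : minpoly K (IntermediateField.AdjoinSimple.gen K x) = H := by
    rw [IntermediateField.minpoly_gen, hx]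
  have hrank : Module.finrank K (↥K⟮x⟯) = H.natDegree := by
    rw [IntermediateField.adjoin.finrank hint, hx]
  have hkey := aux_nonsquare (K := K) (F := ↥K⟮x⟯) hK2 hmon hde hrank
    (IntermediateField.AdjoinSimple.gen K x) hgen γ hns
  have hshape : ((X - C β) ^ 2 + C γ).map (algebraMap K ↥K⟮x⟯)
        - C (IntermediateField.AdjoinSimple.gen K x)
      = (X - C (algebraMap K ↥K⟮x⟯ β)) ^ 2
        + C (algebraMap K ↥K⟮x⟯ γ - IntermediateField.AdjoinSimple.gen K x) := by
    rw [Polynomial.map_add, Polynomial.map_pow, Polynomial.map_sub, map_X, map_C, map_C,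
      C_sub, add_sub_assoc]
  rw [hshape]
  apply aux_quad_irr
  rw [neg_sub]
  exact hkey

end Aux

section Dyn

variable {L M : Type*} [Field L] [Field M] [Algebra L M]

/-- The quadratic `(X - b - ξ)² + c + ξ`. -/
noncomputable def dynPoly (ξ : M) (p : L × L) : M[X] :=
  (X - C (algebraMap L M p.1) - C ξ) ^ 2 + C (algebraMap L M p.2) + C ξ

lemma dynPoly_shape (ξ : M) (p : L × L) :
    dynPoly ξ p = (X - C (algebraMap L M p.1 + ξ)) ^ 2 + C (algebraMap L M p.2 + ξ) := by
  unfold dynPoly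
  rw [C_add, C_add]
  ring

lemma dynPoly_monic (ξ : M) (p : L × L) : (dynPoly ξ p).Monic := by
  rw [dynPoly_shape]
  exact aux_quad_monic _ _

lemma dynPoly_natDegree (ξ : M) (p : L × L) : (dynPoly ξ p).natDegree = 2 := by
  rw [dynPoly_shape]
  exact aux_quad_natDegree _ _

lemma dynFold_comp (ξ : M) (l : List (L × L)) (r : M[X]) :
    l.foldr (fun p G => (dynPoly ξ p).comp G) r
      = (l.foldr (fun p G => (dynPoly ξ p).comp G) X).comp r := by
  induction l with
  | nil => simp
  | cons p l ih =>
    simp only [List.foldr_cons]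
    rw [ih, ← Polynomial.comp_assoc]

lemma dynFold_monic_natDegree (ξ : M) (l : List (L × L)) :
    (l.foldr (fun p G => (dynPoly ξ p).comp G) X).Monic ∧
      (l.foldr (fun p G => (dynPoly ξ p).comp G) X).natDegree = 2 ^ l.length := by
  induction l with
  | nil => exact ⟨monic_X, by simp⟩
  | cons p l ih =>
    obtain ⟨hm, hd⟩ := ih
    have hne : (l.foldr (fun p G => (dynPoly ξ p).comp G) X).natDegree ≠ 0 := by
      rw [hd]
      positivity
    refine ⟨(dynPoly_monic ξ p).comp hm hne, ?_⟩
    rw [List.foldr_cons, natDegree_comp, dynPoly_natDegree, hd, List.length_cons,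
      pow_succ, mul_comm]

lemma dynFold_eval (ξ : M) (l : List (L × L)) (a : L) :
    ∃ a' : L, (l.foldr (fun p G => (dynPoly ξ p).comp G) X).eval (algebraMap L M a + ξ)
      = algebraMap L M a' + ξ := by
  induction l with
  | nil => exact ⟨a, by simp⟩
  | cons p l ih =>
    obtain ⟨a', ha'⟩ := ih
    refine ⟨(a' - p.1) ^ 2 + p.2, ?_⟩
    rw [List.foldr_cons, eval_comp, ha', dynPoly_shape]
    simp only [eval_add, eval_pow, eval_sub, eval_X, eval_C, map_add, map_pow, map_sub]
    ring

end Dyn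

theorem coset_nonsquares_give_dyn_irr (L M : Type*) [Field L] [Fintype L]
    [Field M] [Fintype M] [Algebra L M] (hodd : Odd (Fintype.card M))
    (ξ : M)
    (hplus : ∀ a : L, ¬ IsSquare (algebraMap L M a + ξ))
    (hminus : ∀ a : L, ¬ IsSquare (algebraMap L M a - ξ)) :
    (∀ l : List (L × L), l ≠ [] →
      Irreducible (l.foldr (fun p G =>
        ((X - C (algebraMap L M p.1) - C ξ) ^ 2 + C (algebraMap L M p.2) + C ξ).comp G) X)) ∧
    Function.Injective (fun p : L × L =>
      (X - C (algebraMap L M p.1) - C ξ) ^ 2 + C (algebraMap L M p.2) + C ξ) := by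
  have hM2 : ringChar M ≠ 2 := by
    intro h
    have h1 := FiniteField.even_card_iff_char_two.mp h
    have h2 := Nat.odd_iff.mp hodd
    omega
  constructor
  · show ∀ l : List (L × L), l ≠ [] →
      Irreducible (l.foldr (fun p G => (dynPoly ξ p).comp G) X)
    intro l
    induction l using List.reverseRecOn with
    | nil => exact fun h => absurd rfl h
    | append_singleton l' p ih =>
      intro _
      have hG : (l' ++ [p]).foldr (fun p G => (dynPoly ξ p).comp G) X
          = (l'.foldr (fun p G => (dynPoly ξ p).comp G) X).comp (dynPoly ξ p) := by
        rw [List.foldr_append]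
        have h1 : ([p] : List (L × L)).foldr (fun p G => (dynPoly ξ p).comp G) X
            = dynPoly ξ p := by
          simp
        rw [h1]
        exact dynFold_comp ξ l' (dynPoly ξ p)
      rcases eq_or_ne l' [] with rfl | hl'
      · rw [hG]
        simp only [List.foldr_nil, X_comp]
        rw [dynPoly_shape]
        apply aux_quad_irr
        intro hsq
        apply hminus (-p.2)
        have h2 : algebraMap L M (-p.2) - ξ = -(algebraMap L M p.2 + ξ) := by
          rw [map_neg]
          ring
        rwa [h2]
      · rw [hG, dynPoly_shape]
        obtain ⟨hm, hd⟩ := dynFold_monic_natDegree ξ l'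
        have heven : Even (l'.foldr (fun p G => (dynPoly ξ p).comp G) X).natDegree := by
          rw [hd]
          refine (Nat.even_pow).2 ⟨even_two, ?_⟩
          have hlen := List.length_pos_iff.2 hl'
          omega
        apply aux_step hM2 hm (ih hl') heven
        obtain ⟨a', ha'⟩ := dynFold_eval ξ l' p.2
        rw [ha']
        exact hplus a'
  · show Function.Injective (fun p : L × L => dynPoly ξ p)
    intro p p' h
    simp only at h
    have h2 : (2 : M) ≠ 0 := by
      intro h2
      haveI : CharP M (ringChar M) := ringChar.charP M
      obtain ⟨n, hp, _⟩ := FiniteField.card M (ringChar M)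
      have hd : (ringChar M) ∣ 2 := by
        have := (CharP.cast_eq_zero_iff M (ringChar M) 2).2
        exact (CharP.cast_eq_zero_iff M (ringChar M) 2).1 (by exact_mod_cast h2)
      exact hM2 ((Nat.prime_dvd_prime_iff_eq hp Nat.prime_two).1 hd)
    have e1 : (1 - algebraMap L M p.1) ^ 2 + algebraMap L M p.2
        = (1 - algebraMap L M p'.1) ^ 2 + algebraMap L M p'.2 := by
      have h3 := congrArg (eval (1 + ξ)) h
      simp only [dynPoly, eval_add, eval_pow, eval_sub, eval_X, eval_C] at h3
      linear_combination h3
    have e2 : (-1 - algebraMap L M p.1) ^ 2 + algebraMap L M p.2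
        = (-1 - algebraMap L M p'.1) ^ 2 + algebraMap L M p'.2 := by
      have h3 := congrArg (eval (-1 + ξ)) h
      simp only [dynPoly, eval_add, eval_pow, eval_sub, eval_X, eval_C] at h3
      linear_combination h3
    have h4 : (4 : M) ≠ 0 := by
      have := mul_ne_zero h2 h2
      rwa [show (2 : M) * 2 = 4 by norm_num] at this
    have hb : algebraMap L M p.1 = algebraMap L M p'.1 := by
      have h5 : (4 : M) * algebraMap L M p.1 = 4 * algebraMap L M p'.1 := by
        linear_combination e2 - e1
      exact mul_left_cancel₀ h4 h5
    have hc : algebraMap L M p.2 = algebraMap L M p'.2 := by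
      rw [hb] at e1
      exact add_left_cancel e1
    exact Prod.ext ((algebraMap L M).injective hb) ((algebraMap L M).injective hc)
end
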